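/- arXiv:2311.11612 — 2 statements merged into one kernel-verified Lean document; each statement's English description precedes it below -/
import Mathlib

section
/- Let Y be a proper geodesic metric space, y₀ ∈ Y, and f : Y → ℝ continuous and strictly convex along geodesics. If lim_{τ→+∞} f(γ(τ))/τ > 0 for every unit-speed geodesic ray γ emanating from y₀, then there exist C, D > 0 such that f(y) ≥ C·d(y, y₀) − D for all y ∈ Y. -/
/-!
If `f` stays at least `f y₀ + 1` on some sphere `S(y₀, R)`, convexity along the geodesic from
`y₀` through that sphere to `y` forces `f y ≥ f y₀ + d(y, y₀) / R`, and continuity bounds `f`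
below inside the ball: this is the linear lower bound. Otherwise every sphere meets the sublevel
set `{f ≤ f y₀ + 1}`; this set is closed and, by convexity, contains the geodesic from `y₀` to
each of its points. Geodesic segments from `y₀` of unbounded length inside it subconverge
(Tychonoff, `Y` being proper) to a geodesic ray on which `f` is bounded, and along that ray the
asymptotic slope is `≤ 0`, contradicting the hypothesis.
-/

open Filter Set Metric

section Geodesic

variable {Y : Type*} [MetricSpace Y]

def IsGeodesicOn (γ : ℝ → Y) (S : Set ℝ) : Prop :=
  ∀ s ∈ S, ∀ t ∈ S, dist (γ s) (γ t) = |s - t|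

variable (Y) in
def GeodesicSpace : Prop :=
  ∀ x y : Y, x ≠ y → ∃ γ : ℝ → Y, γ 0 = x ∧ γ (dist x y) = y ∧ IsGeodesicOn γ (Icc 0 (dist x y))

def StrictConvexAlongGeodesics (f : Y → ℝ) : Prop :=
  ∀ (γ : ℝ → Y) (a b : ℝ), a < b → IsGeodesicOn γ (Icc a b) → γ a ≠ γ b →
    ∀ τ ∈ Ioo a b, f (γ τ) < ((τ - a) / (b - a)) * f (γ b) + ((b - τ) / (b - a)) * f (γ a)

theorem IsGeodesicOn.mono {γ : ℝ → Y} {S T : Set ℝ} (hγ : IsGeodesicOn γ T) (hST : S ⊆ T) :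
    IsGeodesicOn γ S :=
  fun s hs t ht => hγ s (hST hs) t (hST ht)

theorem IsGeodesicOn.dist_zero {γ : ℝ → Y} {d τ : ℝ} (hγ : IsGeodesicOn γ (Icc 0 d))
    (hτ : τ ∈ Icc 0 d) : dist (γ 0) (γ τ) = τ := by
  rw [hγ 0 ⟨le_rfl, hτ.1.trans hτ.2⟩ τ hτ, zero_sub, abs_neg, abs_of_nonneg hτ.1]

theorem StrictConvexAlongGeodesics.mul_le_chord {f : Y → ℝ} (hconv : StrictConvexAlongGeodesics f)
    {γ : ℝ → Y} {d τ : ℝ} (hd : 0 < d) (hγ : IsGeodesicOn γ (Icc 0 d)) (hτ : τ ∈ Icc 0 d) :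
    d * f (γ τ) ≤ τ * f (γ d) + (d - τ) * f (γ 0) := by
  rcases hτ.1.eq_or_lt with rfl | hτ₀
  · simp
  rcases hτ.2.eq_or_lt with rfl | hτd
  · simp
  have hne : γ 0 ≠ γ d := by
    intro h
    have := hγ.dist_zero ⟨hd.le, le_rfl⟩
    rw [h, dist_self] at this
    exact hd.ne this
  have hlt := hconv γ 0 d hd hγ hne τ ⟨hτ₀, hτd⟩
  simp only [sub_zero] at hlt
  calc d * f (γ τ) ≤ d * (τ / d * f (γ d) + (d - τ) / d * f (γ 0)) := by gcongr
    _ = τ * f (γ d) + (d - τ) * f (γ 0) := by field_simp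

theorem StrictConvexAlongGeodesics.le_of_endpoints_le {f : Y → ℝ}
    (hconv : StrictConvexAlongGeodesics f) {γ : ℝ → Y} {d τ M : ℝ} (hd : 0 < d)
    (hγ : IsGeodesicOn γ (Icc 0 d)) (hτ : τ ∈ Icc 0 d) (h₀ : f (γ 0) ≤ M) (h₁ : f (γ d) ≤ M) :
    f (γ τ) ≤ M := by
  nlinarith [hconv.mul_le_chord hd hγ hτ, hτ.1, sub_nonneg.2 hτ.2]

theorem StrictConvexAlongGeodesics.add_div_mul_dist_le {f : Y → ℝ}
    (hconv : StrictConvexAlongGeodesics f) (hgeo : GeodesicSpace Y) {y₀ y : Y} {R δ : ℝ}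
    (hR : 0 < R) (hsphere : ∀ z, dist z y₀ = R → f y₀ + δ ≤ f z) (hy : R ≤ dist y y₀) :
    f y₀ + δ / R * dist y y₀ ≤ f y := by
  have hne : y₀ ≠ y := by
    rintro rfl
    rw [dist_self] at hy
    exact hR.not_ge hy
  obtain ⟨γ, hγ₀, hγd, hγ⟩ := hgeo y₀ y hne
  rw [dist_comm] at hy ⊢
  set d := dist y₀ y
  have hRd : R ∈ Icc 0 d := ⟨hR.le, hy⟩
  have hγR : f y₀ + δ ≤ f (γ R) := hsphere _ (by rw [dist_comm, ← hγ₀, hγ.dist_zero hRd])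
  have hchord := hconv.mul_le_chord (hR.trans_le hy) hγ hRd
  rw [hγ₀, hγd] at hchord
  rw [div_mul_eq_mul_div, ← le_sub_iff_add_le', div_le_iff₀ hR]
  nlinarith

theorem StrictConvexAlongGeodesics.exists_linear_lower_bound {f : Y → ℝ} [ProperSpace Y]
    (hconv : StrictConvexAlongGeodesics f) (hgeo : GeodesicSpace Y) (hf : Continuous f)
    {y₀ : Y} {R δ : ℝ} (hR : 0 < R) (hδ : 0 < δ)
    (hsphere : ∀ z, dist z y₀ = R → f y₀ + δ ≤ f z) :
    ∃ C D : ℝ, 0 < C ∧ 0 < D ∧ ∀ y : Y, C * dist y y₀ - D ≤ f y := by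
  obtain ⟨z, -, hz⟩ := (isCompact_closedBall y₀ R).exists_isMinOn
    ⟨y₀, mem_closedBall_self hR.le⟩ hf.continuousOn
  have hmin : ∀ y, dist y y₀ ≤ R → f z ≤ f y := fun y hy => hz hy
  have hfz : -|f z| ≤ f z := neg_abs_le _
  refine ⟨δ / R, δ + |f z|, by positivity, by positivity, fun y => ?_⟩
  rcases le_total (dist y y₀) R with hy | hy
  · have : δ / R * dist y y₀ ≤ δ := by
      calc δ / R * dist y y₀ ≤ δ / R * R := by gcongr
        _ = δ := div_mul_cancel₀ δ hR.ne'
    linarith [hmin y hy]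
  · linarith [hconv.add_div_mul_dist_le hgeo hR hsphere hy, hmin y₀ (by simp [hR.le])]

theorem exists_geodesicRay_of_segments [ProperSpace Y] {K : Set Y} (hK : IsClosed K) {y₀ : Y}
    (γ : ℕ → ℝ → Y) (hγ₀ : ∀ n, γ n 0 = y₀) (hγ : ∀ n : ℕ, IsGeodesicOn (γ n) (Icc 0 n))
    (hγK : ∀ n : ℕ, ∀ t ∈ Icc (0 : ℝ) n, γ n t ∈ K) :
    ∃ ρ : ℝ → Y, ρ 0 = y₀ ∧ IsGeodesicOn ρ (Ici 0) ∧ ∀ t ≥ 0, ρ t ∈ K := by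
  set g : ℕ → ℝ → Y := fun n t => γ n (projIcc (0 : ℝ) n n.cast_nonneg t)
  have hg : ∀ n : ℕ, ∀ t ∈ Icc (0 : ℝ) n, g n t = γ n t := fun n t ht => by
    simp only [g, projIcc_of_mem _ ht]
  have hball : ∀ n t, g n t ∈ closedBall y₀ |t| := fun n t => by
    have hp := (projIcc (0 : ℝ) n n.cast_nonneg t).2
    rw [mem_closedBall, dist_comm, ← hγ₀ n]
    calc dist (γ n 0) (g n t) = projIcc (0 : ℝ) n n.cast_nonneg t := (hγ n).dist_zero hp
      _ ≤ |t| := max_le (abs_nonneg t) ((min_le_right _ _).trans (le_abs_self t))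
  obtain ⟨ρ, -, hρ⟩ := (isCompact_univ_pi fun t => isCompact_closedBall y₀ |t|)
    |>.exists_mapClusterPt_of_frequently (l := atTop)
      (Frequently.of_forall fun n => mem_univ_pi.2 (hball n))
  have hlim : ∀ C : Set (ℝ → Y), IsClosed C → (∀ᶠ n in atTop, g n ∈ C) → ρ ∈ C :=
    fun C hC => hC.mem_of_mapClusterPt hρ
  have hlarge : ∀ t ≥ (0 : ℝ), ∀ᶠ n : ℕ in atTop, t ∈ Icc (0 : ℝ) n := fun t ht =>
    (tendsto_natCast_atTop_atTop.eventually_ge_atTop t).mono fun n hn => ⟨ht, hn⟩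
  refine ⟨ρ, ?_, fun s hs t ht => ?_, fun t ht => ?_⟩
  · refine hlim {h | h 0 = y₀} (isClosed_eq (continuous_apply 0) continuous_const) ?_
    filter_upwards [hlarge 0 le_rfl] with n hn
    simp only [hg n 0 hn, hγ₀]
  · refine hlim {h | dist (h s) (h t) = |s - t|}
      (isClosed_eq ((continuous_apply s).dist (continuous_apply t)) continuous_const) ?_
    filter_upwards [hlarge s hs, hlarge t ht] with n hsn htn
    simp only [hg n s hsn, hg n t htn]
    exact hγ n s hsn t htn
  · refine hlim {h | h t ∈ K} (hK.preimage (continuous_apply t)) ?_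
    filter_upwards [hlarge t ht] with n hn
    simp only [hg n t hn]
    exact hγK n t hn

theorem StrictConvexAlongGeodesics.exists_geodesicRay_le {f : Y → ℝ} [ProperSpace Y]
    (hconv : StrictConvexAlongGeodesics f) (hgeo : GeodesicSpace Y) (hf : Continuous f)
    {y₀ : Y} {M : ℝ} (h₀ : f y₀ ≤ M) (hsphere : ∀ R > 0, ∃ y, dist y y₀ = R ∧ f y ≤ M) :
    ∃ ρ : ℝ → Y, ρ 0 = y₀ ∧ IsGeodesicOn ρ (Ici 0) ∧ ∀ t ≥ 0, f (ρ t) ≤ M := by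
  have hsegment : ∀ n : ℕ, ∃ γ : ℝ → Y, γ 0 = y₀ ∧ IsGeodesicOn γ (Icc 0 n) ∧
      ∀ t ∈ Icc (0 : ℝ) n, f (γ t) ≤ M := by
    intro n
    have hn : (0 : ℝ) < n + 1 := by positivity
    obtain ⟨y, hy, hyM⟩ := hsphere (n + 1) hn
    have hne : y₀ ≠ y := by
      rintro rfl
      rw [dist_self] at hy
      exact hn.ne hy
    obtain ⟨γ, hγ₀, hγd, hγ⟩ := hgeo y₀ y hne
    rw [dist_comm, hy] at hγd hγ
    have hsub : Icc (0 : ℝ) n ⊆ Icc 0 (n + 1) := Icc_subset_Icc_right (by linarith)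
    refine ⟨γ, hγ₀, hγ.mono hsub, fun t ht => ?_⟩
    exact hconv.le_of_endpoints_le hn hγ (hsub ht) (hγ₀ ▸ h₀) (hγd ▸ hyM)
  choose γ hγ₀ hγ hγM using hsegment
  exact exists_geodesicRay_of_segments (isClosed_le hf continuous_const) γ hγ₀ hγ hγM

end Geodesic

theorem nonpos_of_tendsto_div_of_eventually_le {g : ℝ → ℝ} {M : ℝ} {L : EReal}
    (hg : ∀ᶠ t in atTop, g t ≤ M)
    (hL : Tendsto (fun t : ℝ => ((g t / t : ℝ) : EReal)) atTop (nhds L)) : L ≤ 0 := by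
  have hM : Tendsto (fun t : ℝ => ((M / t : ℝ) : EReal)) atTop (nhds ((0 : ℝ) : EReal)) :=
    (continuous_coe_real_ereal.tendsto 0).comp (tendsto_const_nhds.div_atTop tendsto_id)
  refine le_of_tendsto_of_tendsto hL hM ?_
  filter_upwards [hg, eventually_gt_atTop 0] with t ht ht₀
  exact EReal.coe_le_coe_iff.2 (div_le_div_of_nonneg_right ht ht₀.le)

theorem stmt_13_general {Y : Type*} [MetricSpace Y] [ProperSpace Y] (y₀ : Y) (f : Y → ℝ)
    (hf : Continuous f)
    (hgeo : ∀ x y : Y, x ≠ y → ∃ γ : ℝ → Y, γ 0 = x ∧ γ (dist x y) = y ∧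
      ∀ s ∈ Set.Icc 0 (dist x y), ∀ t ∈ Set.Icc 0 (dist x y), dist (γ s) (γ t) = |s - t|)
    (hconv : ∀ (γ : ℝ → Y) (a b : ℝ), a < b →
      (∀ s ∈ Set.Icc a b, ∀ t ∈ Set.Icc a b, dist (γ s) (γ t) = |s - t|) →
      γ a ≠ γ b → ∀ τ ∈ Set.Ioo a b,
        f (γ τ) < ((τ - a) / (b - a)) * f (γ b) + ((b - τ) / (b - a)) * f (γ a))
    (hslope : ∀ γ : ℝ → Y, γ 0 = y₀ →
      (∀ s ∈ Set.Ici (0 : ℝ), ∀ t ∈ Set.Ici (0 : ℝ), dist (γ s) (γ t) = |s - t|) →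
      ∃ L : EReal, 0 < L ∧
        Filter.Tendsto (fun t : ℝ => ((f (γ t) / t : ℝ) : EReal)) Filter.atTop (nhds L)) :
    ∃ C D : ℝ, 0 < C ∧ 0 < D ∧ ∀ y : Y, C * dist y y₀ - D ≤ f y := by
  change StrictConvexAlongGeodesics f at hconv
  by_cases hsphere : ∃ R, 0 < R ∧ ∀ y, dist y y₀ = R → f y₀ + 1 ≤ f y
  · obtain ⟨R, hR, hRy⟩ := hsphere
    exact hconv.exists_linear_lower_bound hgeo hf hR one_pos hRy
  · push Not at hsphere
    obtain ⟨ρ, hρ₀, hρ, hρM⟩ := hconv.exists_geodesicRay_le hgeo hf (lt_add_one _).le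
      fun R hR => (hsphere R hR).imp fun y hy => ⟨hy.1, hy.2.le⟩
    obtain ⟨L, hL, hlim⟩ := hslope ρ hρ₀ hρ
    exact (hL.not_ge
      (nonpos_of_tendsto_div_of_eventually_le ((eventually_ge_atTop 0).mono hρM) hlim)).elim

/-- On a proper geodesic metric space (geodesics from `y₀` extendable to rays), if `f` is
continuous and strictly convex along geodesics, and the asymptotic slope of `f` is positive
along every unit-speed geodesic ray from `y₀`, then `f` grows at least linearly:
`f(y) ≥ C·d(y,y₀) - D` for some `C, D > 0`. -/
theorem stmt_13 {Y : Type*} [MetricSpace Y] [ProperSpace Y] (y₀ : Y) (f : Y → ℝ)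
    (hf : Continuous f)
    (hgeo : ∀ x y : Y, x ≠ y → ∃ γ : ℝ → Y, γ 0 = x ∧ γ (dist x y) = y ∧
      ∀ s ∈ Set.Icc 0 (dist x y), ∀ t ∈ Set.Icc 0 (dist x y), dist (γ s) (γ t) = |s - t|)
    (hext : ∀ (γ : ℝ → Y) (T : ℝ), 0 < T →
      (∀ s ∈ Set.Icc 0 T, ∀ t ∈ Set.Icc 0 T, dist (γ s) (γ t) = |s - t|) →
      ∃ γ' : ℝ → Y, (∀ s ∈ Set.Icc 0 T, γ' s = γ s) ∧
        ∀ s ∈ Set.Ici (0 : ℝ), ∀ t ∈ Set.Ici (0 : ℝ), dist (γ' s) (γ' t) = |s - t|)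
    (hconv : ∀ (γ : ℝ → Y) (a b : ℝ), a < b →
      (∀ s ∈ Set.Icc a b, ∀ t ∈ Set.Icc a b, dist (γ s) (γ t) = |s - t|) →
      γ a ≠ γ b → ∀ τ ∈ Set.Ioo a b,
        f (γ τ) < ((τ - a) / (b - a)) * f (γ b) + ((b - τ) / (b - a)) * f (γ a))
    (hslope : ∀ γ : ℝ → Y, γ 0 = y₀ →
      (∀ s ∈ Set.Ici (0 : ℝ), ∀ t ∈ Set.Ici (0 : ℝ), dist (γ s) (γ t) = |s - t|) →
      ∃ L : EReal, 0 < L ∧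
        Filter.Tendsto (fun t : ℝ => ((f (γ t) / t : ℝ) : EReal)) Filter.atTop (nhds L)) :
    ∃ C D : ℝ, 0 < C ∧ 0 < D ∧ ∀ y : Y, C * dist y y₀ - D ≤ f y :=
  stmt_13_general y₀ f hf hgeo hconv hslope
end

section
/- Let Y be a proper metric space with an isometric right action of a group H, y₀ ∈ Y, and f : Y → ℝ an H-invariant continuous function. If there exist C, D > 0 such that f(y) ≥ C·d_H(y, y₀) − D for all y ∈ Y, where d_H is the reduced distance, then f attains its infimum over Y. -/
/-!
Bounded sublevel sets modulo `H`: if `f y ≤ f y₀`, the bound forces `d_H(y, y₀) ≤ (f y₀ + D) / C`,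
so some translate `g • y` lies in a fixed closed ball `K` around `y₀`. Since `f` is `H`-invariant,
every value of `f` is attained or undercut on `K`, which is compact because `Y` is proper, so a
minimiser of `f` on `K` is a global minimiser.
-/

open Metric

theorem exists_forall_le_of_forall_exists_mem_le {α : Type*} [TopologicalSpace α] [Nonempty α]
    {f : α → ℝ} {K : Set α} (hK : IsCompact K) (hf : ContinuousOn f K)
    (hKf : ∀ y, ∃ z ∈ K, f z ≤ f y) : ∃ x, ∀ y, f x ≤ f y := by
  obtain ⟨z, hzK, -⟩ := hKf (Classical.arbitrary α)
  obtain ⟨x, -, hx⟩ := hK.exists_isMinOn ⟨z, hzK⟩ hf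
  refine ⟨x, fun y => ?_⟩
  obtain ⟨z, hzK, hzy⟩ := hKf y
  exact (hx hzK).trans hzy

section ReducedDist

variable {Y : Type*} [MetricSpace Y] (H : Type*) [Group H] [MulAction H Y]

noncomputable def reducedDist (y₁ y₂ : Y) : ℝ :=
  ⨅ p : H × H, dist (p.1 • y₁) (p.2 • y₂)

variable {H}

theorem exists_dist_smul_lt_of_reducedDist_lt (hiso : ∀ h : H, Isometry fun y : Y => h • y)
    {y₁ y₂ : Y} {r : ℝ} (hr : reducedDist H y₁ y₂ < r) : ∃ g : H, dist (g • y₁) y₂ < r := by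
  obtain ⟨⟨h₁, h₂⟩, hp⟩ := exists_lt_of_ciInf_lt hr
  refine ⟨h₂⁻¹ * h₁, ?_⟩
  have hdist : dist (h₂⁻¹ • h₁ • y₁) (h₂⁻¹ • h₂ • y₂) = dist (h₁ • y₁) (h₂ • y₂) :=
    (hiso h₂⁻¹).dist_eq _ _
  rw [inv_smul_smul, ← mul_smul] at hdist
  exact hdist ▸ hp

theorem exists_smul_mem_closedBall_of_le (hiso : ∀ h : H, Isometry fun y : Y => h • y)
    {f : Y → ℝ} {y₀ : Y} {C D : ℝ} (hC : 0 < C)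
    (hbound : ∀ y : Y, C * reducedDist H y y₀ - D ≤ f y) {y : Y} (hy : f y ≤ f y₀) :
    ∃ g : H, g • y ∈ closedBall y₀ ((f y₀ + D) / C + 1) := by
  have hdist : reducedDist H y y₀ ≤ (f y₀ + D) / C := by
    rw [le_div_iff₀ hC]
    linarith [hbound y]
  obtain ⟨g, hg⟩ := exists_dist_smul_lt_of_reducedDist_lt hiso (hdist.trans_lt (lt_add_one _))
  exact ⟨g, mem_closedBall.2 hg.le⟩

end ReducedDist

theorem stmt_16_general {Y : Type*} [MetricSpace Y] [ProperSpace Y]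
    {H : Type*} [Group H] [MulAction H Y]
    (hiso : ∀ h : H, Isometry fun y : Y => h • y)
    (f : Y → ℝ) (hf : Continuous f) (hinv : ∀ (h : H) (y : Y), f (h • y) = f y)
    (y₀ : Y) (C D : ℝ) (hC : 0 < C)
    (hbound : ∀ y : Y, C * (⨅ p : H × H, dist (p.1 • y) (p.2 • y₀)) - D ≤ f y) :
    ∃ ystar : Y, ∀ y : Y, f ystar ≤ f y := by
  have : Nonempty Y := ⟨y₀⟩
  set R := (f y₀ + D) / C + 1
  have htranslate {y : Y} (hy : f y ≤ f y₀) : ∃ z ∈ closedBall y₀ R, f z = f y :=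
    let ⟨g, hg⟩ := exists_smul_mem_closedBall_of_le hiso hC hbound hy
    ⟨g • y, hg, hinv g y⟩
  refine exists_forall_le_of_forall_exists_mem_le (isCompact_closedBall y₀ R) hf.continuousOn
    fun y => ?_
  rcases le_total (f y) (f y₀) with hy | hy
  · obtain ⟨z, hzK, hz⟩ := htranslate hy
    exact ⟨z, hzK, hz.le⟩
  · -- above the level `f y₀`, a translate of `y₀` itself undercuts `f y`
    obtain ⟨z, hzK, hz⟩ := htranslate le_rfl
    exact ⟨z, hzK, hz.trans_le hy⟩

/-- If an `H`-invariant continuous function `f` on a nonempty proper metric space with an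
isometric `H`-action satisfies `f(y) ≥ C·d_H(y, y₀) - D` with `C, D > 0` (where `d_H` is the
reduced distance), then `f` attains its infimum. -/
theorem stmt_16 {Y : Type*} [MetricSpace Y] [ProperSpace Y] [Nonempty Y]
    {H : Type*} [Group H] [MulAction H Y]
    (hiso : ∀ h : H, Isometry fun y : Y => h • y)
    (f : Y → ℝ) (hf : Continuous f) (hinv : ∀ (h : H) (y : Y), f (h • y) = f y)
    (y₀ : Y) (C D : ℝ) (hC : 0 < C) (hD : 0 < D)
    (hbound : ∀ y : Y, C * (⨅ p : H × H, dist (p.1 • y) (p.2 • y₀)) - D ≤ f y) :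
    ∃ ystar : Y, ∀ y : Y, f ystar ≤ f y :=
  stmt_16_general hiso f hf hinv y₀ C D hC hbound
end
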